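/- arXiv:1410.0024 — 2 statements merged into one kernel-verified Lean document; each statement's English description precedes it below -/
import Mathlib

section
/- In the wall-crossing setup, U_{ω_+} ∩ U_{ω_-} = U_{ω_+} ∖ {z ∈ ℂ^m : z_i = 0 for all i ∈ M_-} = U_{ω_-} ∖ {z ∈ ℂ^m : z_i = 0 for all i ∈ M_+}. -/
/- Formalization of a statement from "The Crepant Transformation Conjecture
for Toric Complete Intersections" (Coates–Iritani–Jiang).

GIT data: `𝕃 = ℤ^r` (modelled by `Fin r → ℤ`), characters `D_1, …, D_m ∈ 𝕃^∨`
(modelled by `D : Fin m → Fin r → ℤ`, viewing `𝕃^∨ ⊗ ℝ` as `Fin r → ℝ`). -/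

open scoped Classical

noncomputable section

namespace CTC

/-- The image of the integral character `D i` in `𝕃^∨ ⊗ ℝ = ℝ^r`. -/
def DR {r m : ℕ} (D : Fin m → Fin r → ℤ) (i : Fin m) : Fin r → ℝ :=
  fun a => (D i a : ℝ)

/-- Integer pairing `v · e` between `𝕃^∨` and `𝕃`. -/
def pairZ {r : ℕ} (v e : Fin r → ℤ) : ℤ := ∑ a, v a * e a

/-- Real pairing `v · e` between `𝕃^∨ ⊗ ℝ` and `𝕃`. -/
def pairR {r : ℕ} (v : Fin r → ℝ) (e : Fin r → ℤ) : ℝ := ∑ a, v a * (e a : ℝ)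

/-- Rational pairing `D_i · f` between a character `D_i ∈ 𝕃^∨` and `f ∈ 𝕃 ⊗ ℚ`. -/
def dotDQ {r : ℕ} (Di : Fin r → ℤ) (f : Fin r → ℚ) : ℚ := ∑ a, (Di a : ℚ) * f a

/-- `∠_I := { Σ_{i ∈ I} a_i D_i : a_i ∈ ℝ, a_i > 0 }`; in particular `∠_∅ = {0}`. -/
def angleCone {m : ℕ} {E : Type*} [AddCommMonoid E] [Module ℝ E]
    (D : Fin m → E) (I : Finset (Fin m)) : Set E :=
  { w | ∃ a : Fin m → ℝ, (∀ i ∈ I, 0 < a i) ∧ w = ∑ i ∈ I, a i • D i }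

/-- The set of anticones `𝒜_ω := { I ⊆ {1,…,m} : ω ∈ ∠_I }`. -/
def anticones {r m : ℕ} (D : Fin m → Fin r → ℤ) (ω : Fin r → ℝ) :
    Set (Finset (Fin m)) :=
  { I | ω ∈ angleCone (DR D) I }

/-- The extended ample cone `C_ω := ⋂_{I ∈ 𝒜_ω} ∠_I`. -/
def extAmpleCone {r m : ℕ} (D : Fin m → Fin r → ℤ) (ω : Fin r → ℝ) :
    Set (Fin r → ℝ) :=
  ⋂ I ∈ anticones D ω, angleCone (DR D) I

/-- `U_ω := ⋃_{I ∈ 𝒜_ω} { z ∈ ℂ^m : z_i ≠ 0 for all i ∈ I }`. -/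
def Uset {r m : ℕ} (D : Fin m → Fin r → ℤ) (ω : Fin r → ℝ) : Set (Fin m → ℂ) :=
  ⋃ I ∈ anticones D ω, { z : Fin m → ℂ | ∀ i ∈ I, z i ≠ 0 }

/-- `S_ω := { i : {1,…,m} ∖ {i} ∉ 𝒜_ω }`. -/
def Sset {r m : ℕ} (D : Fin m → Fin r → ℤ) (ω : Fin r → ℝ) : Finset (Fin m) :=
  Finset.univ.filter fun i => Finset.univ.erase i ∉ anticones D ω

/-- Assumption (⋆): `{1,…,m} ∈ 𝒜_ω`, and for each `I ∈ 𝒜_ω` the set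
`{D_i : i ∈ I}` spans `𝕃^∨ ⊗ ℝ` over `ℝ`. -/
def AssumptionStar {r m : ℕ} (D : Fin m → Fin r → ℤ) (ω : Fin r → ℝ) : Prop :=
  Finset.univ ∈ anticones D ω ∧
    ∀ I ∈ anticones D ω, Submodule.span ℝ (DR D '' (I : Set (Fin m))) = ⊤

/-- The wall `W = { v ∈ 𝕃^∨ ⊗ ℝ : v · e = 0 }`. -/
def wall {r : ℕ} (e : Fin r → ℤ) : Set (Fin r → ℝ) := { v | pairR v e = 0 }

/-- `M_+ := { i : D_i · e > 0 }`. -/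
def Mplus {r m : ℕ} (D : Fin m → Fin r → ℤ) (e : Fin r → ℤ) : Finset (Fin m) :=
  Finset.univ.filter fun i => 0 < pairZ (D i) e

/-- `M_- := { i : D_i · e < 0 }`. -/
def Mminus {r m : ℕ} (D : Fin m → Fin r → ℤ) (e : Fin r → ℤ) : Finset (Fin m) :=
  Finset.univ.filter fun i => pairZ (D i) e < 0

/-- `M_0 := { i : D_i · e = 0 }`. -/
def Mzero {r m : ℕ} (D : Fin m → Fin r → ℤ) (e : Fin r → ℤ) : Finset (Fin m) :=
  Finset.univ.filter fun i => pairZ (D i) e = 0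

/-- The wall-crossing setup of §5.1 of the paper: two stability conditions
`ω_+`, `ω_-` satisfying Assumption (⋆) whose chambers are separated by the
wall `W = e^⊥`, satisfying the crepancy condition `Σ_i D_i · e = 0`, together
with a stability condition `ω₀` in the relative interior of the common facet
`W ∩ closure C_+ = W ∩ closure C_-` (which spans the hyperplane `W`). -/
structure WallCrossingSetup (r m : ℕ) where
  D : Fin m → Fin r → ℤ
  ωp : Fin r → ℝ
  ωm : Fin r → ℝ
  ω₀ : Fin r → ℝ
  e : Fin r → ℤ
  hr : 0 < r
  hrm : r ≤ m
  starP : AssumptionStar D ωp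
  starM : AssumptionStar D ωm
  he : e ≠ 0
  posP : ∀ v ∈ extAmpleCone D ωp, 0 < pairR v e
  negM : ∀ v ∈ extAmpleCone D ωm, pairR v e < 0
  crepant : (∑ i, pairZ (D i) e) = 0
  wallEq : wall e ∩ closure (extAmpleCone D ωp)
      = wall e ∩ closure (extAmpleCone D ωm)
  wallSpanEq : Submodule.span ℝ (wall e ∩ closure (extAmpleCone D ωp))
      = Submodule.span ℝ (wall e)
  interior₀ : ω₀ ∈ intrinsicInterior ℝ (wall e ∩ closure (extAmpleCone D ωp))

/-
The inclusion `⊆` holds because `ω_-` pairs negatively with `e`, so every anticone of `ω_-` meets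
`M_-`. For `⊇`, let `z ∈ U_+` with `z_j ≠ 0` for some `j ∈ M_-`, and let `I ∈ 𝒜_+`
be an anticone on which `z` does not vanish. Since `d_j - κ ω_-` lies on the wall for a suitable
`κ > 0`, and `ω₀` is a relative interior point of the common facet `W ∩ closure C_±`, the point
`ω₀ + δ d_j` lies in the open cone `C_-` for small `δ > 0`. Moving `ω₀` slightly into `C_+` gives
`q = p + δ d_j ∈ C_-` with `p ∈ C_+ ⊆ ∠_I`, so `q ∈ ∠_{I ∪ {j}}`. Minimising the mass outside
`I ∪ {j}` over the nonnegative representations of `ω_-` (a linear program, whose minimum is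
attained at a representation with linearly independent support) yields `J ⊆ I ∪ {j}` with
`ω_- ∈ ∠_J`, because `q` lies in every cone `∠_J` containing `ω_-`. The second equality is the
first one for the swapped setup `(ω_-, ω_+, -e)`.
-/

section NonnegRep

variable {m : ℕ} {E : Type*} [AddCommGroup E] [Module ℝ E]

def IsNonnegRep (d : Fin m → E) (ω : E) (x : Fin m → ℝ) : Prop :=
  0 ≤ x ∧ Fintype.linearCombination ℝ d x = ω

lemma mem_angleCone_iff {d : Fin m → E} {J : Finset (Fin m)} {ω : E} :
    ω ∈ angleCone d J ↔ ∃ x : Fin m → ℝ, (∀ i ∈ J, 0 < x i) ∧ (∀ i ∉ J, x i = 0) ∧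
      Fintype.linearCombination ℝ d x = ω := by
  constructor
  · rintro ⟨a, ha, rfl⟩
    refine ⟨fun i => if i ∈ J then a i else 0, fun i hi => by simpa [hi] using ha i hi,
      fun i hi => by simp [hi], ?_⟩
    simp [Fintype.linearCombination_apply, ite_smul, Finset.sum_ite_mem]
  · rintro ⟨x, hpos, hzero, rfl⟩
    refine ⟨x, hpos, ?_⟩
    rw [Fintype.linearCombination_apply]
    exact (Finset.sum_subset (Finset.subset_univ J) fun i _ hi => by simp [hzero i hi]).symm

lemma nonneg_of_forall_mem_pos {x : Fin m → ℝ} {J : Finset (Fin m)} (hpos : ∀ i ∈ J, 0 < x i)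
    (hzero : ∀ i ∉ J, x i = 0) : 0 ≤ x := fun i => by
  by_cases hi : i ∈ J
  exacts [(hpos i hi).le, (hzero i hi).ge]

lemma add_smul_mem_angleCone_insert {d : Fin m → E} {I : Finset (Fin m)} {p : E}
    (hp : p ∈ angleCone d I) (j : Fin m) {t : ℝ} (ht : 0 < t) :
    p + t • d j ∈ angleCone d (insert j I) := by
  obtain ⟨x, hpos, hzero, rfl⟩ := mem_angleCone_iff.1 hp
  have hx0 := nonneg_of_forall_mem_pos hpos hzero
  refine mem_angleCone_iff.2 ⟨x + t • Pi.single j 1, fun i hi => ?_, fun i hi => ?_, by simp⟩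
  · rcases Finset.mem_insert.1 hi with rfl | hi
    · simpa using add_pos_of_nonneg_of_pos (hx0 i) ht
    · have : 0 ≤ t * Pi.single (M := fun _ => ℝ) j 1 i := by
        by_cases hij : i = j <;> simp [hij, ht.le]
      simpa using add_pos_of_pos_of_nonneg (hpos i hi) this
  · simp only [Finset.mem_insert, not_or] at hi
    simp [hzero i hi.2, hi.1]

lemma IsNonnegRep.mem_angleCone_support {d : Fin m → E} {ω : E} {x : Fin m → ℝ}
    (hx : IsNonnegRep d ω x) : ω ∈ angleCone d (Function.support x).toFinset :=
  mem_angleCone_iff.2 ⟨x, fun i hi => lt_of_le_of_ne (hx.1 i) (by simpa [eq_comm] using hi),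
    fun i hi => by simpa using hi, hx.2⟩

lemma exists_pos_add_smul_nonneg_eq_zero {x μ : Fin m → ℝ} (hx : 0 ≤ x)
    (hμ : ∀ i, μ i < 0 → 0 < x i) {i₀ : Fin m} (hi₀ : μ i₀ < 0) :
    ∃ θ : ℝ, 0 < θ ∧ 0 ≤ x + θ • μ ∧ ∃ i, μ i < 0 ∧ (x + θ • μ) i = 0 := by
  obtain ⟨i, hi, hmin⟩ := Finset.exists_min_image (Finset.univ.filter fun i => μ i < 0)
    (fun i => x i / -μ i) ⟨i₀, by simpa using hi₀⟩
  simp only [Finset.mem_filter, Finset.mem_univ, true_and] at hi hmin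
  refine ⟨x i / -μ i, div_pos (hμ i hi) (neg_pos.2 hi), fun k => ?_, i, hi, ?_⟩
  · have hθ : 0 ≤ x i / -μ i := div_nonneg (hx i) (neg_nonneg.2 hi.le)
    show 0 ≤ x k + x i / -μ i * μ k
    rcases lt_or_ge (μ k) 0 with hk | hk
    · have := (le_div_iff₀ (neg_pos.2 hk)).1 (hmin k hk)
      linarith
    · exact add_nonneg (hx k) (mul_nonneg hθ hk)
  · show x i + x i / -μ i * μ i = 0
    rw [div_mul_eq_mul_div, mul_div_assoc, div_neg, div_self hi.ne]
    ring

lemma exists_descent_of_ne_zero {w g : Fin m → ℝ} (hw : 0 ≤ w) (hg : g ≠ 0) :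
    ∃ μ, (μ = g ∨ μ = -g) ∧ w ⬝ᵥ μ ≤ 0 ∧ ∃ i, μ i < 0 := by
  obtain ⟨μ, hμg, hwμ⟩ : ∃ μ, (μ = g ∨ μ = -g) ∧ w ⬝ᵥ μ ≤ 0 := by
    rcases le_total (w ⬝ᵥ g) 0 with h | h
    · exact ⟨g, .inl rfl, h⟩
    · exact ⟨-g, .inr rfl, by rwa [dotProduct_neg, neg_nonpos]⟩
  by_cases hneg : ∃ i, μ i < 0
  · exact ⟨μ, hμg, hwμ, hneg⟩
  simp only [not_exists, not_lt] at hneg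
  have hμ0 : μ ≠ 0 := by rcases hμg with rfl | rfl <;> simpa using hg
  obtain ⟨i, hi⟩ := Function.ne_iff.1 hμ0
  refine ⟨-μ, by rcases hμg with rfl | rfl <;> simp, ?_, i, ?_⟩
  · have : 0 ≤ w ⬝ᵥ μ := Finset.sum_nonneg fun k _ => mul_nonneg (hw k) (hneg k)
    rw [dotProduct_neg]
    linarith
  · exact neg_neg_of_pos (lt_of_le_of_ne (hneg i) (Ne.symm hi))

lemma IsNonnegRep.exists_linearIndepOn_support_le {d : Fin m → E} {ω : E} {w x : Fin m → ℝ}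
    (hw : 0 ≤ w) (hx : IsNonnegRep d ω x) :
    ∃ y, IsNonnegRep d ω y ∧ LinearIndepOn ℝ d (Function.support y) ∧ w ⬝ᵥ y ≤ w ⬝ᵥ x := by
  induction h : (Function.support x).toFinset.card using Nat.strong_induction_on
    generalizing x with
  | _ n ih =>
  by_cases hind : LinearIndepOn ℝ d (Function.support x)
  · exact ⟨x, hx, hind, le_rfl⟩
  rw [← Set.coe_toFinset (Function.support x), not_linearIndepOn_finset_iff] at hind
  obtain ⟨g, hgsum, i₀, hi₀, hgi₀⟩ := hind
  set g' : Fin m → ℝ := fun i => if x i = 0 then 0 else g i with hg'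
  have hg'ne : g' ≠ 0 := Function.ne_iff.2 ⟨i₀, by simpa [hg', by simpa using hi₀] using hgi₀⟩
  have hg'sum : Fintype.linearCombination ℝ d g' = 0 := by
    rw [Fintype.linearCombination_apply, ← hgsum]
    calc ∑ i, g' i • d i = ∑ i ∈ (Function.support x).toFinset, g' i • d i :=
          (Finset.sum_subset (Finset.subset_univ _) fun i _ hi => by simp_all).symm
      _ = _ := Finset.sum_congr rfl fun i hi => by simp_all
  obtain ⟨μ, hμg, hwμ, i₁, hi₁⟩ := exists_descent_of_ne_zero hw hg'ne
  have hμsupp : ∀ i, x i = 0 → μ i = 0 := fun i hi => by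
    rcases hμg with rfl | rfl <;> simp [hg', hi]
  have hμsum : Fintype.linearCombination ℝ d μ = 0 := by
    rcases hμg with rfl | rfl <;> simp [hg'sum]
  obtain ⟨θ, hθ, hy0, i, hi, hyi⟩ := exists_pos_add_smul_nonneg_eq_zero hx.1
    (fun i hi => lt_of_le_of_ne (hx.1 i) fun h => hi.ne (hμsupp i h.symm)) hi₁
  have hysupp : (Function.support (x + θ • μ)).toFinset ⊂ (Function.support x).toFinset := by
    refine Finset.ssubset_iff_of_subset (fun k hk => ?_) |>.2 ⟨i, ?_, ?_⟩
    · simp only [Set.mem_toFinset, Function.mem_support] at hk ⊢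
      intro hxk
      simp [hxk, hμsupp k hxk] at hk
    · simpa using fun h => hi.ne (hμsupp i h)
    · simpa using hyi
  obtain ⟨y, hy, hyind, hyle⟩ := ih _ (h ▸ Finset.card_lt_card hysupp)
    ⟨hy0, by rw [map_add, map_smul, hμsum, smul_zero, add_zero, hx.2]⟩ rfl
  refine ⟨y, hy, hyind, hyle.trans ?_⟩
  rw [dotProduct_add, dotProduct_smul, smul_eq_mul]
  exact add_le_of_nonpos_right (mul_nonpos_of_nonneg_of_nonpos hθ.le hwμ)

lemma finite_setOf_isNonnegRep_linearIndepOn (d : Fin m → E) (ω : E) :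
    {x | IsNonnegRep d ω x ∧ LinearIndepOn ℝ d (Function.support x)}.Finite := by
  refine Set.Finite.of_finite_image (f := Function.support) (Set.toFinite _) ?_
  rintro x ⟨hx, hxind⟩ y ⟨hy, -⟩ hxy
  have hzero : ∀ i, x i = 0 → y i = 0 := fun i hi => by
    rw [← Function.notMem_support, ← hxy]
    exact Function.notMem_support.2 hi
  have hsum : ∑ i ∈ (Function.support x).toFinset, (x - y) i • d i = 0 := by
    rw [Finset.sum_subset (Finset.subset_univ _) fun i _ hi => by
      simp only [Set.mem_toFinset, Function.mem_support, not_not] at hi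
      simp [hi, hzero i hi]]
    rw [← Fintype.linearCombination_apply, map_sub, hx.2, hy.2, sub_self]
  funext i
  by_cases hi : x i = 0
  · rw [hi, hzero i hi]
  · exact sub_eq_zero.1 (linearIndepOn_finset_iff.1 (by simpa using hxind) _ hsum i (by simpa))

lemma IsNonnegRep.exists_isMinOn {d : Fin m → E} {ω : E} {w x : Fin m → ℝ} (hw : 0 ≤ w)
    (hx : IsNonnegRep d ω x) :
    ∃ y, IsNonnegRep d ω y ∧ ∀ z, IsNonnegRep d ω z → w ⬝ᵥ y ≤ w ⬝ᵥ z := by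
  obtain ⟨x', hx', hx'ind, -⟩ := hx.exists_linearIndepOn_support_le hw
  obtain ⟨y, hy, hmin⟩ := Set.exists_min_image _ (w ⬝ᵥ ·)
    (finite_setOf_isNonnegRep_linearIndepOn d ω) ⟨x', hx', hx'ind⟩
  refine ⟨y, hy.1, fun z hz => ?_⟩
  obtain ⟨z', hz', hz'ind, hle⟩ := hz.exists_linearIndepOn_support_le hw
  exact (hmin z' ⟨hz', hz'ind⟩).trans hle

theorem exists_subset_mem_angleCone {d : Fin m → E} {ω q : E} {J₀ K : Finset (Fin m)}
    (hω : ω ∈ angleCone d J₀) (hq : ∀ J, ω ∈ angleCone d J → q ∈ angleCone d J)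
    (hK : q ∈ angleCone d K) : ∃ J ⊆ K, ω ∈ angleCone d J := by
  set w : Fin m → ℝ := fun i => if i ∈ K then 0 else 1 with hw
  have hw0 : 0 ≤ w := fun i => by by_cases hi : i ∈ K <;> simp [hw, hi]
  obtain ⟨x₀, hx₀pos, hx₀zero, hx₀⟩ := mem_angleCone_iff.1 hω
  obtain ⟨x, hx, hmin⟩ := IsNonnegRep.exists_isMinOn (x := x₀) hw0
    ⟨nonneg_of_forall_mem_pos hx₀pos hx₀zero, hx₀⟩
  refine ⟨_, fun i hiJ => ?_, hx.mem_angleCone_support⟩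
  by_contra hiK
  obtain ⟨b, hbpos, hbzero, hb⟩ := mem_angleCone_iff.1 (hq _ hx.mem_angleCone_support)
  obtain ⟨c, hcpos, hczero, hc⟩ := mem_angleCone_iff.1 hK
  have hb0 := nonneg_of_forall_mem_pos hbpos hbzero
  have hc0 := nonneg_of_forall_mem_pos hcpos hczero
  have hwc : w ⬝ᵥ c = 0 :=
    Finset.sum_eq_zero fun k _ => by by_cases hk : k ∈ K <;> simp [hw, hk, hczero]
  have hwb : b i ≤ w ⬝ᵥ b := by
    simpa [dotProduct, hw, hiK] using Finset.single_le_sum (fun k _ => mul_nonneg (hw0 k) (hb0 k))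
      (Finset.mem_univ i)
  -- moving from `x` along `c - b` keeps representing `ω` and lowers the mass outside `K`
  obtain ⟨θ, hθ, hy0, -⟩ := exists_pos_add_smul_nonneg_eq_zero (μ := c - b) hx.1
    (fun k hk => by
      have : k ∈ (Function.support x).toFinset := by
        by_contra h
        simp only [Pi.sub_apply, hbzero k h, sub_zero] at hk
        exact hk.not_ge (hc0 k)
      simpa using lt_of_le_of_ne (hx.1 k) (Ne.symm (by simpa using this)))
    (i₀ := i) (by simp [hczero i hiK, hbpos i hiJ])
  have := hmin _ ⟨hy0, by rw [map_add, map_smul, map_sub, hb, hc, sub_self, smul_zero,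
    add_zero, hx.2]⟩
  rw [dotProduct_add, dotProduct_smul, dotProduct_sub, hwc, smul_eq_mul] at this
  nlinarith [hbpos i hiJ]

end NonnegRep

section AngleConeTopology

variable {m : ℕ} {E : Type*} [NormedAddCommGroup E] [NormedSpace ℝ E]

lemma smul_mem_angleCone {D : Fin m → E} {I : Finset (Fin m)} {x : E}
    (hx : x ∈ angleCone D I) {c : ℝ} (hc : 0 < c) : c • x ∈ angleCone D I := by
  obtain ⟨a, ha, rfl⟩ := hx
  exact ⟨c • a, fun i hi => mul_pos hc (ha i hi), by simp [Finset.smul_sum, smul_smul]⟩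

lemma convex_angleCone (D : Fin m → E) (I : Finset (Fin m)) : Convex ℝ (angleCone D I) := by
  rintro _ ⟨a, ha, rfl⟩ _ ⟨b, hb, rfl⟩ s t hs ht hst
  rcases hs.eq_or_lt with rfl | hs
  · simpa [show t = 1 by linarith] using ⟨b, hb, rfl⟩
  refine ⟨s • a + t • b, fun i hi => ?_, ?_⟩
  · simpa using add_pos_of_pos_of_nonneg (mul_pos hs (ha i hi)) (mul_nonneg ht (hb i hi).le)
  · simp [Finset.smul_sum, add_smul, smul_smul, Finset.sum_add_distrib]

lemma isOpen_angleCone [FiniteDimensional ℝ E] {D : Fin m → E} {I : Finset (Fin m)}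
    (hspan : Submodule.span ℝ (D '' (I : Set (Fin m))) = ⊤) : IsOpen (angleCone D I) := by
  let L : (Fin m → ℝ) →ₗ[ℝ] E := ∑ i ∈ I, (LinearMap.proj i).smulRight (D i)
  have hL : ∀ a, L a = ∑ i ∈ I, a i • D i := fun a => by simp [L, LinearMap.sum_apply]
  have hsurj : Function.Surjective L := by
    rw [← LinearMap.range_eq_top, eq_top_iff, ← hspan, Submodule.span_le]
    rintro _ ⟨i, hi, rfl⟩
    exact ⟨Pi.single i 1, by simp [hL, Pi.single_apply, Finset.sum_ite_eq', Finset.mem_coe.1 hi]⟩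
  have : angleCone D I = L '' (Set.pi I fun _ => Set.Ioi 0) := by
    ext x
    simp [angleCone, hL, eq_comm]
  rw [this]
  exact L.isOpenMap_of_finiteDimensional hsurj _
    (isOpen_set_pi I.finite_toSet fun _ _ => isOpen_Ioi)

lemma add_mem_of_mem_closure {C : Set E} (hC : IsOpen C) (hconv : Convex ℝ C)
    (hsmul : ∀ c : ℝ, 0 < c → ∀ x ∈ C, c • x ∈ C) {y u : E} (hy : y ∈ closure C)
    (hu : u ∈ C) : y + u ∈ C := by
  have h := hconv.combo_interior_closure_mem_interior (hC.interior_eq ▸ hu) hy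
    (by norm_num : (0 : ℝ) < 1 / 2) (by norm_num : (0 : ℝ) ≤ 1 / 2) (by norm_num)
  rw [hC.interior_eq] at h
  convert hsmul 2 two_pos _ h using 1
  module

lemma add_mem_angleCone_of_mem_closure [FiniteDimensional ℝ E] {D : Fin m → E}
    {I : Finset (Fin m)} (hspan : Submodule.span ℝ (D '' (I : Set (Fin m))) = ⊤) {y u : E}
    (hy : y ∈ closure (angleCone D I)) (hu : u ∈ angleCone D I) : y + u ∈ angleCone D I :=
  add_mem_of_mem_closure (isOpen_angleCone hspan) (convex_angleCone D I)
    (fun _ hc _ hx => smul_mem_angleCone hx hc) hy hu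

end AngleConeTopology

lemma exists_pos_add_smul_mem_of_mem_intrinsicInterior {E : Type*} [NormedAddCommGroup E]
    [NormedSpace ℝ E] {A : Set E} {x v : E} (hx : x ∈ intrinsicInterior ℝ A)
    (hv : v ∈ (affineSpan ℝ A).direction) : ∃ δ : ℝ, 0 < δ ∧ x + δ • v ∈ A := by
  obtain ⟨y, hy, rfl⟩ := hx
  let f : ℝ → affineSpan ℝ A := fun t =>
    ⟨t • v +ᵥ (y : E), AffineSubspace.vadd_mem_of_mem_direction
      ((affineSpan ℝ A).direction.smul_mem t hv) y.2⟩
  have hf : Continuous f := by fun_prop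
  have hf0 : f 0 = y := by ext; simp [f]
  have hev : ∀ᶠ t in nhdsWithin (0 : ℝ) (Set.Ioi 0), f t ∈ interior (Subtype.val ⁻¹' A) :=
    nhdsWithin_le_nhds (hf.continuousAt.preimage_mem_nhds (hf0 ▸ isOpen_interior.mem_nhds hy))
  obtain ⟨δ, hδA, hδ⟩ := (hev.and self_mem_nhdsWithin).exists
  exact ⟨δ, hδ, by simpa [f, add_comm] using interior_subset hδA⟩

section WallCrossing

variable {r m : ℕ}

def pairRₗ (e : Fin r → ℤ) : (Fin r → ℝ) →ₗ[ℝ] ℝ := Fintype.linearCombination ℝ fun a => (e a : ℝ)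

lemma pairRₗ_apply (e : Fin r → ℤ) (v : Fin r → ℝ) : pairRₗ e v = pairR v e := rfl

lemma pairR_DR (D : Fin m → Fin r → ℤ) (i : Fin m) (e : Fin r → ℤ) :
    pairR (DR D i) e = pairZ (D i) e := by
  simp [pairR, pairZ, DR]

lemma pairR_neg (v : Fin r → ℝ) (e : Fin r → ℤ) : pairR v (-e) = -pairR v e := by
  simp [pairR]

lemma pairZ_neg (v e : Fin r → ℤ) : pairZ v (-e) = -pairZ v e := by
  simp [pairZ]

lemma wall_neg (e : Fin r → ℤ) : wall (-e) = wall e := by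
  ext v
  simp [wall, pairR_neg]

lemma mem_Uset {D : Fin m → Fin r → ℤ} {ω : Fin r → ℝ} {z : Fin m → ℂ} :
    z ∈ Uset D ω ↔ ∃ I ∈ anticones D ω, ∀ i ∈ I, z i ≠ 0 := by
  simp [Uset]

lemma Mminus_neg (D : Fin m → Fin r → ℤ) (e : Fin r → ℤ) : Mminus D (-e) = Mplus D e := by
  ext i
  simp [Mminus, Mplus, pairZ_neg]

lemma mem_Mminus {D : Fin m → Fin r → ℤ} {e : Fin r → ℤ} {i : Fin m} :
    i ∈ Mminus D e ↔ pairZ (D i) e < 0 := by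
  simp [Mminus]

lemma mem_extAmpleCone {D : Fin m → Fin r → ℤ} {ω v : Fin r → ℝ} :
    v ∈ extAmpleCone D ω ↔ ∀ I ∈ anticones D ω, v ∈ angleCone (DR D) I := by
  simp [extAmpleCone]

lemma self_mem_extAmpleCone (D : Fin m → Fin r → ℤ) (ω : Fin r → ℝ) : ω ∈ extAmpleCone D ω :=
  mem_extAmpleCone.2 fun _ hI => hI

lemma AssumptionStar.isOpen_extAmpleCone {D : Fin m → Fin r → ℤ} {ω : Fin r → ℝ}
    (h : AssumptionStar D ω) : IsOpen (extAmpleCone D ω) :=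
  (Set.toFinite _).isOpen_biInter fun _ hI => isOpen_angleCone (h.2 _ hI)

lemma zero_mem_closure_extAmpleCone (D : Fin m → Fin r → ℤ) (ω : Fin r → ℝ) :
    (0 : Fin r → ℝ) ∈ closure (extAmpleCone D ω) := by
  have h : Filter.Tendsto (fun t : ℝ => t • ω) (nhdsWithin 0 (Set.Ioi 0)) (nhds 0) := by
    have hcont : Continuous fun t : ℝ => t • ω := by fun_prop
    exact (hcont.tendsto' 0 0 (zero_smul ℝ ω)).mono_left nhdsWithin_le_nhds
  refine mem_closure_of_tendsto h (eventually_nhdsWithin_of_forall fun t (ht : 0 < t) => ?_)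
  exact mem_extAmpleCone.2 fun _ hI => smul_mem_angleCone hI ht

namespace WallCrossingSetup

variable (W : WallCrossingSetup r m)

lemma pairR_ωm_neg : pairR W.ωm W.e < 0 :=
  W.negM _ (self_mem_extAmpleCone _ _)

lemma exists_mem_anticone_pairZ_neg {J : Finset (Fin m)} (hJ : J ∈ anticones W.D W.ωm) :
    ∃ i ∈ J, pairZ (W.D i) W.e < 0 := by
  obtain ⟨a, ha, hωm⟩ := hJ
  have hsum : pairR W.ωm W.e = ∑ i ∈ J, a i * pairZ (W.D i) W.e := by
    rw [hωm, ← pairRₗ_apply, map_sum]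
    simp only [map_smul, smul_eq_mul, pairRₗ_apply, pairR_DR]
  by_contra! hall
  have : 0 ≤ pairR W.ωm W.e := hsum ▸ Finset.sum_nonneg fun i hi =>
    mul_nonneg (ha i hi).le (by exact_mod_cast hall i hi)
  exact this.not_gt W.pairR_ωm_neg

lemma wall_subset_direction :
    wall W.e ⊆ (affineSpan ℝ (wall W.e ∩ closure (extAmpleCone W.D W.ωp))).direction := by
  have h0 : (0 : Fin r → ℝ) ∈ wall W.e ∩ closure (extAmpleCone W.D W.ωp) :=
    ⟨by simp [wall, pairR], zero_mem_closure_extAmpleCone _ _⟩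
  rw [direction_affineSpan, vectorSpan_eq_span_vsub_set_right ℝ h0]
  simp only [vsub_eq_sub, sub_zero, Set.image_id', W.wallSpanEq]
  exact Submodule.subset_span

lemma exists_pos_add_smul_DR_mem_extAmpleCone {j : Fin m} (hj : pairZ (W.D j) W.e < 0) :
    ∃ δ : ℝ, 0 < δ ∧ W.ω₀ + δ • DR W.D j ∈ extAmpleCone W.D W.ωm := by
  set κ := (pairZ (W.D j) W.e : ℝ) / pairR W.ωm W.e
  have hκ : 0 < κ := div_pos_of_neg_of_neg (by exact_mod_cast hj) W.pairR_ωm_neg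
  have hwall : DR W.D j - κ • W.ωm ∈ wall W.e := by
    change pairR _ _ = 0
    rw [← pairRₗ_apply, map_sub, map_smul, pairRₗ_apply, pairRₗ_apply, pairR_DR, smul_eq_mul,
      div_mul_cancel₀ _ W.pairR_ωm_neg.ne, sub_self]
  obtain ⟨δ, hδ, hmem⟩ := exists_pos_add_smul_mem_of_mem_intrinsicInterior W.interior₀
    (W.wall_subset_direction hwall)
  have hcl : W.ω₀ + δ • (DR W.D j - κ • W.ωm) ∈ closure (extAmpleCone W.D W.ωm) :=
    (W.wallEq ▸ hmem).2
  refine ⟨δ, hδ, mem_extAmpleCone.2 fun J hJ => ?_⟩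
  have := add_mem_angleCone_of_mem_closure (W.starM.2 J hJ)
    (closure_mono (fun v hv => mem_extAmpleCone.1 hv J hJ) hcl)
    (smul_mem_angleCone hJ (mul_pos hδ hκ))
  convert this using 1
  module

lemma exists_anticone_subset_insert {I : Finset (Fin m)} (hI : I ∈ anticones W.D W.ωp)
    {j : Fin m} (hj : pairZ (W.D j) W.e < 0) :
    ∃ J ∈ anticones W.D W.ωm, J ⊆ insert j I := by
  obtain ⟨δ, hδ, hmem⟩ := W.exists_pos_add_smul_DR_mem_extAmpleCone hj
  have hU : IsOpen {p | p + δ • DR W.D j ∈ extAmpleCone W.D W.ωm} :=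
    W.starM.isOpen_extAmpleCone.preimage (continuous_add_const _)
  obtain ⟨p, hpm, hpp⟩ :=
    mem_closure_iff.1 (intrinsicInterior_subset W.interior₀).2 _ hU hmem
  obtain ⟨J, hJI, hJ⟩ := exists_subset_mem_angleCone W.starM.1
    (fun J hJ => mem_extAmpleCone.1 hpm J hJ)
    (add_smul_mem_angleCone_insert (mem_extAmpleCone.1 hpp I hI) j hδ)
  exact ⟨J, hJ, hJI⟩

lemma Uset_inter_Uset_eq_diff :
    Uset W.D W.ωp ∩ Uset W.D W.ωm
      = Uset W.D W.ωp \ { z : Fin m → ℂ | ∀ i ∈ Mminus W.D W.e, z i = 0 } := by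
  ext z
  constructor
  · rintro ⟨hzp, hzm⟩
    refine ⟨hzp, fun hz => ?_⟩
    obtain ⟨J, hJ, hJz⟩ := mem_Uset.1 hzm
    obtain ⟨i, hiJ, hi⟩ := W.exists_mem_anticone_pairZ_neg hJ
    exact hJz i hiJ (hz i (mem_Mminus.2 hi))
  · rintro ⟨hzp, hz⟩
    obtain ⟨j, hj, hzj⟩ : ∃ j ∈ Mminus W.D W.e, z j ≠ 0 := by simpa using hz
    obtain ⟨I, hI, hIz⟩ := mem_Uset.1 hzp
    obtain ⟨J, hJ, hJI⟩ := W.exists_anticone_subset_insert hI (mem_Mminus.1 hj)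
    refine ⟨hzp, mem_Uset.2 ⟨J, hJ, fun i hi => ?_⟩⟩
    rcases Finset.mem_insert.1 (hJI hi) with rfl | hiI
    exacts [hzj, hIz i hiI]

def swap : WallCrossingSetup r m where
  D := W.D
  ωp := W.ωm
  ωm := W.ωp
  ω₀ := W.ω₀
  e := -W.e
  hr := W.hr
  hrm := W.hrm
  starP := W.starM
  starM := W.starP
  he := neg_ne_zero.2 W.he
  posP v hv := by simpa [pairR_neg] using W.negM v hv
  negM v hv := by simpa [pairR_neg] using W.posP v hv
  crepant := by simp [pairZ_neg, W.crepant]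
  wallEq := by rw [wall_neg]; exact W.wallEq.symm
  wallSpanEq := by rw [wall_neg, ← W.wallEq]; exact W.wallSpanEq
  interior₀ := by rw [wall_neg, ← W.wallEq]; exact W.interior₀

end WallCrossingSetup

end WallCrossing

/-- The loci of indeterminacy of `φ : X_+ ⇢ X_-` and its inverse:
`U_+ ∩ U_- = U_+ ∖ {z : z_i = 0 ∀ i ∈ M_-} = U_- ∖ {z : z_i = 0 ∀ i ∈ M_+}`. -/
theorem indeterminacy_loci {r m : ℕ} (W : WallCrossingSetup r m) :
    Uset W.D W.ωp ∩ Uset W.D W.ωm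
        = Uset W.D W.ωp \ { z : Fin m → ℂ | ∀ i ∈ Mminus W.D W.e, z i = 0 } ∧
    Uset W.D W.ωp ∩ Uset W.D W.ωm
        = Uset W.D W.ωm \ { z : Fin m → ℂ | ∀ i ∈ Mplus W.D W.e, z i = 0 } := by
  refine ⟨W.Uset_inter_Uset_eq_diff, ?_⟩
  rw [Set.inter_comm, ← Mminus_neg]
  exact W.swap.Uset_inter_Uset_eq_diff

end CTC
end
end

section
/- In the wall-crossing setup, let δ ∈ 𝒜_+ ∩ 𝒜_-. Then {d ∈ 𝕂_+ : D_j·d ∈ ℤ for every j ∈ δ} = {d ∈ 𝕂_- : D_j·d ∈ ℤ for every j ∈ δ}. -/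
/- Formalization of a statement from "The Crepant Transformation Conjecture
for Toric Complete Intersections" (Coates–Iritani–Jiang).

GIT data: `𝕃 = ℤ^r` (modelled by `Fin r → ℤ`), characters `D_1, …, D_m ∈ 𝕃^∨`
(modelled by `D : Fin m → Fin r → ℤ`, viewing `𝕃^∨ ⊗ ℝ` as `Fin r → ℝ`). -/

open scoped Classical

noncomputable section

namespace CTC

/-- `𝕂_ω := { f ∈ 𝕃 ⊗ ℚ : { i : D_i · f ∈ ℤ } ∈ 𝒜_ω }`. -/
def Kset {r m : ℕ} (D : Fin m → Fin r → ℤ) (ω : Fin r → ℝ) : Set (Fin r → ℚ) :=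
  { f | (Finset.univ.filter fun i => ∃ n : ℤ, dotDQ (D i) f = (n : ℚ)) ∈ anticones D ω }

open Topology

lemma exists_pos_mul_lt_of_forall_pos {ι : Type*} (s : Finset ι) {a : ι → ℝ} (b : ι → ℝ)
    (ha : ∀ i ∈ s, 0 < a i) : ∃ ε > 0, ∀ i ∈ s, ε * b i < a i := by
  have hsmall : ∀ᶠ ε in 𝓝[>] (0 : ℝ), ∀ i ∈ s, ε * b i < a i := by
    refine (Filter.eventually_all_finset s).2 fun i hi => nhdsWithin_le_nhds ?_
    exact (continuous_mul_const (b i)).continuousAt.eventually_lt continuousAt_const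
      (by simpa using ha i hi)
  exact (eventually_mem_nhdsWithin.and hsmall).exists

/-- Writing `Σ_{J∖δ} D_i = Σ_δ b_i D_i`, a point `Σ_δ a_i D_i` equals
`Σ_δ (a_i - ε b_i) D_i + ε Σ_{J∖δ} D_i`, whose coefficients are positive for small `ε > 0`. -/
theorem angleCone_subset_of_span_eq_top {m : ℕ} {E : Type*} [AddCommGroup E] [Module ℝ E]
    (D : Fin m → E) {δ J : Finset (Fin m)} (hδJ : δ ⊆ J)
    (hspan : Submodule.span ℝ (D '' δ) = ⊤) : angleCone D δ ⊆ angleCone D J := by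
  rintro w ⟨a, ha, rfl⟩
  obtain ⟨b, hb⟩ := (Submodule.mem_span_image_finset_iff_exists_fun' ℝ).1
    (hspan ▸ Submodule.mem_top : ∑ i ∈ J \ δ, D i ∈ Submodule.span ℝ (D '' δ))
  obtain ⟨ε, hε, hεb⟩ := exists_pos_mul_lt_of_forall_pos δ b ha
  set c : Fin m → ℝ := fun i => if i ∈ δ then a i - ε * b i else ε
  have hout : ∑ i ∈ J \ δ, c i • D i = ε • ∑ i ∈ J \ δ, D i := by
    rw [Finset.smul_sum]
    exact Finset.sum_congr rfl fun i hi => by simp [c, (Finset.mem_sdiff.1 hi).2]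
  have hin : ∑ i ∈ δ, c i • D i = ∑ i ∈ δ, a i • D i - ε • ∑ i ∈ J \ δ, D i := by
    rw [← hb, Finset.smul_sum, ← Finset.sum_sub_distrib]
    exact Finset.sum_congr rfl fun i hi => by simp [c, hi, sub_smul, mul_smul]
  refine ⟨c, fun i _ => ?_, ?_⟩
  · by_cases hi : i ∈ δ
    · simpa [c, hi] using hεb i hi
    · simpa [c, hi] using hε
  · rw [← Finset.sum_sdiff hδJ, hout, hin]
    abel

theorem AssumptionStar.mem_anticones_of_subset {r m : ℕ} {D : Fin m → Fin r → ℤ}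
    {ω : Fin r → ℝ} (hstar : AssumptionStar D ω) {δ J : Finset (Fin m)} (hδ : δ ∈ anticones D ω)
    (hδJ : δ ⊆ J) : J ∈ anticones D ω :=
  angleCone_subset_of_span_eq_top (DR D) hδJ (hstar.2 δ hδ) hδ

theorem AssumptionStar.mem_Kset_of_integral_on_anticone {r m : ℕ} {D : Fin m → Fin r → ℤ}
    {ω : Fin r → ℝ} (hstar : AssumptionStar D ω) {δ : Finset (Fin m)} (hδ : δ ∈ anticones D ω)
    {d : Fin r → ℚ} (hd : ∀ j ∈ δ, ∃ n : ℤ, dotDQ (D j) d = (n : ℚ)) : d ∈ Kset D ω :=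
  hstar.mem_anticones_of_subset hδ fun j hj => Finset.mem_filter.2 ⟨Finset.mem_univ j, hd j hj⟩

/-- For a common anticone `δ ∈ 𝒜_+ ∩ 𝒜_-`, the summation sets of the
restrictions to the corresponding fixed point of the `H`-functions of `X_+`
and `X_-` coincide:
`{d ∈ 𝕂_+ : D_j·d ∈ ℤ ∀ j ∈ δ} = {d ∈ 𝕂_- : D_j·d ∈ ℤ ∀ j ∈ δ}`. -/
theorem common_anticone_K_sets {r m : ℕ} (W : WallCrossingSetup r m)
    (δ : Finset (Fin m))
    (hδp : δ ∈ anticones W.D W.ωp) (hδm : δ ∈ anticones W.D W.ωm) :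
    { d : Fin r → ℚ | d ∈ Kset W.D W.ωp ∧
        ∀ j ∈ δ, ∃ n : ℤ, dotDQ (W.D j) d = (n : ℚ) }
      = { d : Fin r → ℚ | d ∈ Kset W.D W.ωm ∧
          ∀ j ∈ δ, ∃ n : ℤ, dotDQ (W.D j) d = (n : ℚ) } := by
  ext d
  exact ⟨fun ⟨_, hd⟩ => ⟨W.starM.mem_Kset_of_integral_on_anticone hδm hd, hd⟩,
    fun ⟨_, hd⟩ => ⟨W.starP.mem_Kset_of_integral_on_anticone hδp hd, hd⟩⟩

end CTC
end
end
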